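/- Let A0, A1 be nonempty finite index types and let N be a quantum channel from Matrix A0 A0 ℂ to Matrix A1 A1 ℂ. Then the coherence robustness r_C(N) := sInf {t : ℝ | 0 ≤ t ∧ ∃ E₀, E₀ is a classical channel ∧ (t • J(E₀) − J(N)).PosSemidef} equals the value of the semidefinite program sInf { (trace ω).re / |A0| : ω ∈ Matrix (A0×A1) (A0×A1) ℂ, ω.PosSemidef, 𝒟_{full}(ω) = ω, PTr₂(ω) = ((trace ω) / |A0|) • 1, (ω − J(N)).PosSemidef }, where PTr₂(ω) i j := Σ_k ω (i,k) (j,k) is the partial trace over the A1 factor, 1 is the identity matrix on A0, and |A0| is the cardinality of A0. -/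

import Mathlib

open Matrix Kronecker ComplexOrder

noncomputable section

/-- Choi matrix of a linear map between matrix algebras. -/
def choi {ι κ : Type*} [Fintype ι] [DecidableEq ι]
    (Φ : Matrix ι ι ℂ →ₗ[ℂ] Matrix κ κ ℂ) : Matrix (ι × κ) (ι × κ) ℂ :=
  Matrix.of fun p q => Φ (Matrix.single p.1 q.1 1) p.2 q.2

/-- Completely positive: the Choi matrix is positive semidefinite. -/
def IsCP {ι κ : Type*} [Fintype ι] [DecidableEq ι] [Fintype κ]
    (Φ : Matrix ι ι ℂ →ₗ[ℂ] Matrix κ κ ℂ) : Prop := (choi Φ).PosSemidef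

/-- Trace preserving. -/
def IsTP {ι κ : Type*} [Fintype ι] [Fintype κ]
    (Φ : Matrix ι ι ℂ →ₗ[ℂ] Matrix κ κ ℂ) : Prop := ∀ X, (Φ X).trace = X.trace

/-- Quantum channel: CP and TP. -/
def IsChannel {ι κ : Type*} [Fintype ι] [DecidableEq ι] [Fintype κ]
    (Φ : Matrix ι ι ℂ →ₗ[ℂ] Matrix κ κ ℂ) : Prop := IsCP Φ ∧ IsTP Φ

/-- Max-relative robustness `r(X‖Y)` between two maps. -/
def maxRelRobust {ι κ : Type*} [Fintype ι] [DecidableEq ι] [Fintype κ]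
    (X Y : Matrix ι ι ℂ →ₗ[ℂ] Matrix κ κ ℂ) : ℝ :=
  sInf {t : ℝ | 0 ≤ t ∧ (t • choi Y - choi X).PosSemidef}

/-- Dephasing (decoherence) map as a linear map. -/
def deph {ι : Type*} [DecidableEq ι] : Matrix ι ι ℂ →ₗ[ℂ] Matrix ι ι ℂ where
  toFun M := Matrix.of fun i j => if i = j then M i j else 0
  map_add' X Y := by
    ext i j
    by_cases h : i = j <;> simp [h]
  map_smul' c X := by
    ext i j
    by_cases h : i = j <;> simp [h]

/-- Classical map: invariant under dephasing of input and output. -/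
def IsClassical {ι κ : Type*} [DecidableEq ι] [DecidableEq κ]
    (Φ : Matrix ι ι ℂ →ₗ[ℂ] Matrix κ κ ℂ) : Prop := deph ∘ₗ Φ ∘ₗ deph = Φ

/-- Coherence robustness `r_C(N)`: robustness relative to classical channels. -/
def coherenceRobust {ι κ : Type*} [Fintype ι] [DecidableEq ι] [Fintype κ] [DecidableEq κ]
    (N : Matrix ι ι ℂ →ₗ[ℂ] Matrix κ κ ℂ) : ℝ :=
  sInf {t : ℝ | 0 ≤ t ∧ ∃ E₀ : Matrix ι ι ℂ →ₗ[ℂ] Matrix κ κ ℂ,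
    IsChannel E₀ ∧ IsClassical E₀ ∧ (t • choi E₀ - choi N).PosSemidef}

/-- Partial trace over the second factor. -/
def ptrSnd {α β : Type*} [Fintype β] (ω : Matrix (α × β) (α × β) ℂ) : Matrix α α ℂ :=
  Matrix.of fun i j => ∑ k : β, ω (i, k) (j, k)

section Aux

set_option linter.unusedSectionVars false

variable {ι κ : Type*} [Fintype ι] [DecidableEq ι] [Fintype κ] [DecidableEq κ]

/-- The linear map reconstructed from a (Choi) matrix. -/
def mapOfChoi (ω : Matrix (ι × κ) (ι × κ) ℂ) : Matrix ι ι ℂ →ₗ[ℂ] Matrix κ κ ℂ where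
  toFun X := Matrix.of fun k l => ∑ i, ∑ j, X i j * ω (i, k) (j, l)
  map_add' X Y := by
    ext k l
    simp [add_mul, Finset.sum_add_distrib]
  map_smul' c X := by
    ext k l
    simp [Finset.mul_sum, mul_assoc]

lemma deph_apply {n : Type*} [DecidableEq n] (M : Matrix n n ℂ) (i j : n) :
    deph M i j = if i = j then M i j else 0 := rfl

lemma mapOfChoi_apply (ω : Matrix (ι × κ) (ι × κ) ℂ) (X : Matrix ι ι ℂ) (k l : κ) :
    mapOfChoi ω X k l = ∑ i, ∑ j, X i j * ω (i, k) (j, l) := rfl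

lemma choi_mapOfChoi (ω : Matrix (ι × κ) (ι × κ) ℂ) : choi (mapOfChoi ω) = ω := by
  ext ⟨i, k⟩ ⟨j, l⟩
  simp only [choi, mapOfChoi, Matrix.of_apply, LinearMap.coe_mk, AddHom.coe_mk]
  simp [Matrix.single, ite_and, boole_mul, Finset.sum_ite_eq]

lemma trace_choi (Φ : Matrix ι ι ℂ →ₗ[ℂ] Matrix κ κ ℂ) (hΦ : IsTP Φ) :
    (choi Φ).trace = Fintype.card ι := by
  have h1 : (choi Φ).trace = ∑ i : ι, (Φ (Matrix.single i i 1)).trace := by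
    simp [Matrix.trace, choi, Fintype.sum_prod_type, Matrix.diag]
  rw [h1]
  have h2 : ∀ i : ι, (Matrix.single i i (1:ℂ)).trace = 1 := by
    intro i
    classical
    rw [Matrix.trace]
    simp [Matrix.diag, Matrix.single, ite_and, Finset.sum_ite_eq]
  rw [Finset.sum_congr rfl fun i _ => (hΦ _).trans (h2 i)]
  simp

lemma ptrSnd_choi (Φ : Matrix ι ι ℂ →ₗ[ℂ] Matrix κ κ ℂ) (hΦ : IsTP Φ) :
    ptrSnd (choi Φ) = 1 := by
  ext i j
  have h1 : ptrSnd (choi Φ) i j = (Φ (Matrix.single i j 1)).trace := by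
    simp [ptrSnd, choi, Matrix.trace, Matrix.diag]
  rw [h1, hΦ]
  by_cases h : i = j <;>
    simp [Matrix.trace, Matrix.diag, Matrix.single, ite_and, Finset.sum_ite_eq, h,
      Matrix.one_apply, eq_comm]

lemma diag_nonneg {n : Type*} [Fintype n] [DecidableEq n] {M : Matrix n n ℂ}
    (h : M.PosSemidef) (i : n) : 0 ≤ M i i := by
  exact h.diag_nonneg

lemma trace_psd_nonneg {n : Type*} [Fintype n] [DecidableEq n] {M : Matrix n n ℂ}
    (h : M.PosSemidef) : 0 ≤ M.trace :=
  Finset.sum_nonneg fun i _ => diag_nonneg h i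

lemma real_smul_eq {n m : Type*} (M : Matrix n m ℂ) (r : ℝ) : r • M = (r : ℂ) • M := by
  ext i j; simp [Complex.real_smul]

lemma psd_smul {n : Type*} [Fintype n] {M : Matrix n n ℂ}
    (h : M.PosSemidef) {r : ℝ} (hr : 0 ≤ r) : (r • M).PosSemidef := by
  rw [real_smul_eq]
  constructor
  · unfold Matrix.IsHermitian
    rw [Matrix.conjTranspose_smul, h.1]
    congr 1
    simp [Complex.ext_iff]
  · intro x
    have h2 := h.2 x
    exact (h.smul (a := (r:ℂ)) (by exact_mod_cast hr)).2 x

lemma deph_stdBasisMatrix_ne {i j : ι} (h : i ≠ j) :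
    deph (Matrix.single i j (1:ℂ)) = 0 := by
  ext a b
  simp only [deph_apply, Matrix.single, Matrix.of_apply, Matrix.zero_apply]
  by_cases hab : a = b
  · subst hab
    simp only [if_true]
    rw [if_neg]
    rintro ⟨rfl, rfl⟩
    exact h rfl
  · simp [hab]

lemma deph_choi_of_classical (Φ : Matrix ι ι ℂ →ₗ[ℂ] Matrix κ κ ℂ) (h : IsClassical Φ) :
    deph (choi Φ) = choi Φ := by
  ext ⟨i, k⟩ ⟨j, l⟩
  rw [deph_apply]
  by_cases hpq : ((i, k) : ι × κ) = (j, l)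
  · simp [hpq]
  · rw [if_neg hpq]
    have hΦ : Φ (Matrix.single i j 1) =
        deph (Φ (deph (Matrix.single i j 1))) := (LinearMap.congr_fun h _).symm
    show (0:ℂ) = Φ (Matrix.single i j 1) k l
    rw [hΦ]
    by_cases hij : i = j
    · subst hij
      have hkl : k ≠ l := by
        intro hkl
        exact hpq (by rw [hkl])
      simp [deph_apply, hkl]
    · rw [deph_stdBasisMatrix_ne hij]
      simp [deph_apply]

lemma isClassical_mapOfChoi {ω : Matrix (ι × κ) (ι × κ) ℂ} (hω : deph ω = ω) :
    IsClassical (mapOfChoi ω) := by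
  have hz : ∀ p q : ι × κ, p ≠ q → ω p q = 0 := by
    intro p q hpq
    have h2 : deph ω p q = ω p q := congrFun (congrFun hω p) q
    rw [deph_apply, if_neg hpq] at h2
    exact h2.symm
  apply LinearMap.ext
  intro X
  ext k l
  simp only [LinearMap.comp_apply, deph_apply, mapOfChoi_apply]
  by_cases hkl : k = l
  · subst hkl
    rw [if_pos rfl]
    apply Finset.sum_congr rfl
    intro i _
    apply Finset.sum_congr rfl
    intro j _
    by_cases hij : i = j
    · subst hij; rw [if_pos rfl]
    · rw [if_neg hij, hz (i,k) (j,k) (by simp [hij]), zero_mul, mul_zero]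
  · rw [if_neg hkl]
    symm
    apply Finset.sum_eq_zero
    intro i _
    apply Finset.sum_eq_zero
    intro j _
    rw [hz (i,k) (j,l) (by simp [hkl]), mul_zero]

lemma isTP_mapOfChoi {ω : Matrix (ι × κ) (ι × κ) ℂ} (h : ptrSnd ω = 1) :
    IsTP (mapOfChoi ω) := by
  intro X
  have key : (mapOfChoi ω X).trace = ∑ i, ∑ j, X i j * ptrSnd ω i j := by
    simp only [Matrix.trace, Matrix.diag, mapOfChoi_apply, ptrSnd, Matrix.of_apply,
      Finset.mul_sum]
    rw [Finset.sum_comm]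
    apply Finset.sum_congr rfl
    intro i _
    rw [Finset.sum_comm]
  rw [key, h]
  simp [Matrix.one_apply, mul_ite, Finset.sum_ite_eq, Matrix.trace, Matrix.diag]

lemma ptrSnd_smul (r : ℂ) (ω : Matrix (ι × κ) (ι × κ) ℂ) :
    ptrSnd (r • ω) = r • ptrSnd ω := by
  ext i j
  simp [ptrSnd, Finset.mul_sum]

end Aux

/-- The coherence robustness equals the value of the primal SDP of
the log-robustness of coherence. -/
theorem coherenceRobust_eq_SDP
    {A0 A1 : Type*}
    [Fintype A0] [DecidableEq A0] [Nonempty A0]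
    [Fintype A1] [DecidableEq A1] [Nonempty A1]
    (N : Matrix A0 A0 ℂ →ₗ[ℂ] Matrix A1 A1 ℂ) (hN : IsChannel N) :
    coherenceRobust N =
      sInf {r : ℝ | ∃ ω : Matrix (A0 × A1) (A0 × A1) ℂ,
        ω.PosSemidef ∧ deph ω = ω ∧
        ptrSnd ω = (ω.trace / (Fintype.card A0 : ℂ)) • (1 : Matrix A0 A0 ℂ) ∧
        (ω - choi N).PosSemidef ∧
        r = (ω.trace).re / (Fintype.card A0 : ℝ)} := by
  have hcard0 : (0:ℝ) < (Fintype.card A0 : ℝ) := by exact_mod_cast Fintype.card_pos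
  have hcardC : (Fintype.card A0 : ℂ) ≠ 0 := by
    exact_mod_cast Nat.cast_ne_zero.mpr Fintype.card_ne_zero
  have trN : (choi N).trace = (Fintype.card A0 : ℂ) := trace_choi N hN.2
  unfold coherenceRobust
  congr 1
  ext t
  simp only [Set.mem_setOf_eq]
  constructor
  · rintro ⟨ht, E₀, ⟨hCP, hTP⟩, hcl, hpsd⟩
    have htr : ((t : ℂ) • choi E₀ : Matrix (A0 × A1) (A0 × A1) ℂ).trace
        = (t : ℂ) * (Fintype.card A0 : ℂ) := by
      rw [Matrix.trace_smul, trace_choi E₀ hTP, smul_eq_mul]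
    refine ⟨t • choi E₀, psd_smul hCP ht, ?_, ?_, hpsd, ?_⟩
    · rw [real_smul_eq, LinearMap.map_smul, deph_choi_of_classical E₀ hcl]
    · rw [real_smul_eq, ptrSnd_smul, ptrSnd_choi E₀ hTP, htr,
        mul_div_assoc, div_self hcardC, mul_one]
    · have hre : ((t : ℂ) * (Fintype.card A0 : ℂ)).re = t * (Fintype.card A0 : ℝ) := by
        have : ((t : ℂ) * (Fintype.card A0 : ℂ)) = ((t * (Fintype.card A0 : ℝ) : ℝ) : ℂ) := by
          push_cast; ring
        rw [this, Complex.ofReal_re]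
      rw [real_smul_eq, htr, hre, mul_div_assoc, div_self hcard0.ne', mul_one]
  · rintro ⟨ω, hψ, hdeph, hptr, hdiff, ht⟩
    have hz : (0:ℂ) ≤ (ω - choi N).trace := trace_psd_nonneg hdiff
    rw [Complex.nonneg_iff] at hz
    have htrace_split : ω.trace = (ω - choi N).trace + (Fintype.card A0 : ℂ) := by
      rw [Matrix.trace_sub, trN]; ring
    have him : ω.trace.im = 0 := by
      rw [htrace_split]; simp [hz.2]
    have hre_ge : (Fintype.card A0 : ℝ) ≤ ω.trace.re := by
      rw [htrace_split]
      simp only [Complex.add_re, Complex.natCast_re]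
      linarith [hz.1]
    have ht1 : 1 ≤ t := by
      rw [ht, le_div_iff₀ hcard0, one_mul]
      exact hre_ge
    have htpos : (0:ℝ) < t := lt_of_lt_of_le one_pos ht1
    have htne : (t : ℂ) ≠ 0 := by exact_mod_cast htpos.ne'
    have htrval : ω.trace = (t : ℂ) * (Fintype.card A0 : ℂ) := by
      have hre : ω.trace.re = t * (Fintype.card A0 : ℝ) := by
        rw [ht]; field_simp
      apply Complex.ext
      · rw [hre]; simp
      · rw [him]; simp
    set E₀ := mapOfChoi ((t⁻¹ : ℝ) • ω) with hE₀
    have hchoi : choi E₀ = (t⁻¹ : ℝ) • ω := choi_mapOfChoi _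
    refine ⟨le_of_lt htpos, E₀, ⟨?_, ?_⟩, ?_, ?_⟩
    · rw [IsCP, hchoi]
      exact psd_smul hψ (inv_nonneg.mpr htpos.le)
    · apply isTP_mapOfChoi
      rw [real_smul_eq, ptrSnd_smul, hptr, htrval, smul_smul]
      have hscal : (((t⁻¹ : ℝ)) : ℂ) * ((t : ℂ) * (Fintype.card A0 : ℂ) / (Fintype.card A0 : ℂ))
          = 1 := by
        push_cast
        field_simp
      rw [hscal, one_smul]
    · apply isClassical_mapOfChoi
      rw [real_smul_eq, LinearMap.map_smul, hdeph]
    · rw [hchoi, smul_smul, mul_inv_cancel₀ htpos.ne', one_smul]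
      exact hdiff

end
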